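/- Let R > 0 and 0 < δ < 1 be real numbers, and let a : ℝ → ℝ satisfy a'(t) = R · a(t) · (a(t) - δ) · (1 - a(t)) for all t ≥ 0 (in the sense of HasDerivAt), with δ < a(0) < 1. Then for every t ≥ 0 the explicit solution formula holds: (a(t)/a(0))^(1/δ) · ((a(t) - δ)/(a(0) - δ))^(-1/(δ·(1-δ))) · ((1 - a(t))/(1 - a(0)))^(1/(1-δ)) = exp(-R·t), where powers are real powers of positive bases. -/

import Mathlib

/-!
The thresholds `δ` and `1` are equilibria of the locally Lipschitz field
`x ↦ R x (x - δ) (1 - x)`, so by uniqueness of solutions a trajectory starting in `(δ, 1)` can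
never reach them, and by the intermediate value theorem it stays in `(δ, 1)`. There the partial
fraction decomposition
`1 / (x (x - δ) (1 - x)) = -1 / (δ x) + 1 / (δ (1 - δ) (x - δ)) + 1 / ((1 - δ) (1 - x))`
integrates to the potential `P = dgatePotential δ` with `P' = -1 / (x (x - δ) (1 - x))`, so
`P (a t)` decreases at the constant rate `R`; exponentiating `P (a t) - P (a 0) = -R t` gives the
formula.
-/

open Real Set

theorem LocallyLipschitz.eqOn_const_of_hasDerivAt {E : Type*} [NormedAddCommGroup E]
    [NormedSpace ℝ E] {v : E → E} (hv : LocallyLipschitz v) {x₀ : E} (hx₀ : v x₀ = 0)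
    {a : ℝ → E} {t₀ t₁ : ℝ} (ha : ∀ t ∈ Icc t₀ t₁, HasDerivAt a (v (a t)) t) (h : a t₁ = x₀) :
    EqOn a (fun _ ↦ x₀) (Icc t₀ t₁) := by
  have hcont : ContinuousOn a (Icc t₀ t₁) := HasDerivAt.continuousOn ha
  set K := insert x₀ (a '' Icc t₀ t₁)
  obtain ⟨L, hL⟩ := hv.locallyLipschitzOn.exists_lipschitzOnWith_of_compact
    ((isCompact_Icc.image_of_continuousOn hcont).insert x₀)
  refine ODE_solution_unique_of_mem_Icc_left (v := fun _ ↦ v) (s := fun _ ↦ K)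
    (fun _ _ ↦ hL) hcont (fun t ht ↦ (ha t (Ioc_subset_Icc_self ht)).hasDerivWithinAt)
    (fun t ht ↦ mem_insert_of_mem _ (mem_image_of_mem a (Ioc_subset_Icc_self ht)))
    continuousOn_const (fun t _ ↦ hx₀ ▸ hasDerivWithinAt_const t _ x₀)
    (fun _ _ ↦ mem_insert x₀ _) h

theorem mem_Ioo_of_hasDerivAt_of_eq_zero {v : ℝ → ℝ} (hv : LocallyLipschitz v) {p q : ℝ}
    (hp : v p = 0) (hq : v q = 0) {a : ℝ → ℝ} {t₀ : ℝ}
    (ha : ∀ t, t₀ ≤ t → HasDerivAt a (v (a t)) t) (h₀ : a t₀ ∈ Ioo p q) {t : ℝ} (ht : t₀ ≤ t) :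
    a t ∈ Ioo p q := by
  have hcont : ContinuousOn a (Icc t₀ t) := HasDerivAt.continuousOn fun s hs ↦ ha s hs.1
  have start_of_hit {x : ℝ} (hx : v x = 0) (hit : x ∈ a '' Icc t₀ t) : a t₀ = x := by
    obtain ⟨s, hs, rfl⟩ := hit
    exact hv.eqOn_const_of_hasDerivAt hx (fun r hr ↦ ha r hr.1) rfl ⟨le_rfl, hs.1⟩
  by_contra hout
  rcases le_or_gt (a t) p with hle | hgt
  · exact h₀.1.ne' (start_of_hit hp (intermediate_value_Icc' ht hcont ⟨hle, h₀.1.le⟩))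
  · have hge : q ≤ a t := by_contra fun hlt ↦ hout ⟨hgt, not_le.mp hlt⟩
    exact h₀.2.ne (start_of_hit hq (intermediate_value_Icc ht hcont ⟨h₀.2.le, hge⟩))

noncomputable def dgatePotential (δ x : ℝ) : ℝ :=
  log x / δ - log (x - δ) / (δ * (1 - δ)) + log (1 - x) / (1 - δ)

theorem hasDerivAt_dgatePotential {δ x : ℝ} (hδ₀ : 0 < δ) (hδ₁ : δ < 1) (hx : x ∈ Ioo δ 1) :
    HasDerivAt (dgatePotential δ) (-(x * (x - δ) * (1 - x))⁻¹) x := by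
  obtain ⟨hδx, hx1⟩ := hx
  have hx₀ : x ≠ 0 := (hδ₀.trans hδx).ne'
  have hxδ : x - δ ≠ 0 := (sub_pos.mpr hδx).ne'
  have h1x : 1 - x ≠ 0 := (sub_pos.mpr hx1).ne'
  have h1δ : 1 - δ ≠ 0 := (sub_pos.mpr hδ₁).ne'
  refine ((((hasDerivAt_log hx₀).div_const δ).sub
      ((((hasDerivAt_id' x).sub_const δ).log hxδ).div_const (δ * (1 - δ)))).add
      ((((hasDerivAt_id' x).const_sub 1).log h1x).div_const (1 - δ))).congr_deriv ?_
  field_simp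
  ring

theorem rpow_ratios_eq_exp_dgatePotential_sub {δ x y : ℝ} (hδ₀ : 0 < δ) (hx : x ∈ Ioo δ 1)
    (hy : y ∈ Ioo δ 1) :
    (x / y) ^ (1 / δ) * ((x - δ) / (y - δ)) ^ (-(1 / (δ * (1 - δ)))) *
      ((1 - x) / (1 - y)) ^ (1 / (1 - δ)) = exp (dgatePotential δ x - dgatePotential δ y) := by
  obtain ⟨hδx, hx1⟩ := hx
  obtain ⟨hδy, hy1⟩ := hy
  have hx₀ : 0 < x := hδ₀.trans hδx
  have hy₀ : 0 < y := hδ₀.trans hδy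
  rw [rpow_def_of_pos (div_pos hx₀ hy₀), rpow_def_of_pos (div_pos (sub_pos.2 hδx) (sub_pos.2 hδy)),
    rpow_def_of_pos (div_pos (sub_pos.2 hx1) (sub_pos.2 hy1)), ← exp_add, ← exp_add,
    log_div hx₀.ne' hy₀.ne', log_div (sub_pos.2 hδx).ne' (sub_pos.2 hδy).ne',
    log_div (sub_pos.2 hx1).ne' (sub_pos.2 hy1).ne', dgatePotential, dgatePotential]
  ring_nf

theorem dgatePotential_comp_eq_sub {R δ : ℝ} (hδ₀ : 0 < δ) (hδ₁ : δ < 1) {a : ℝ → ℝ}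
    (ha : ∀ t, 0 ≤ t → HasDerivAt a (R * a t * (a t - δ) * (1 - a t)) t)
    (hmem : ∀ t, 0 ≤ t → a t ∈ Ioo δ 1) {t : ℝ} (ht : 0 ≤ t) :
    dgatePotential δ (a t) = dgatePotential δ (a 0) - R * t := by
  have hderiv : ∀ s ∈ uIcc 0 t, HasDerivAt (fun s ↦ dgatePotential δ (a s)) (-R) s := by
    intro s hs
    have hs₀ : 0 ≤ s := (uIcc_of_le ht ▸ hs).1
    obtain ⟨hδa, ha1⟩ := hmem s hs₀
    have hpos : 0 < a s * (a s - δ) * (1 - a s) :=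
      mul_pos (mul_pos (hδ₀.trans hδa) (sub_pos.2 hδa)) (sub_pos.2 ha1)
    refine ((hasDerivAt_dgatePotential hδ₀ hδ₁ ⟨hδa, ha1⟩).comp s (ha s hs₀)).congr_deriv ?_
    rw [show R * a s * (a s - δ) * (1 - a s) = R * (a s * (a s - δ) * (1 - a s)) by ring,
      neg_mul, inv_mul_eq_div, mul_div_cancel_right₀ R hpos.ne']
  have := intervalIntegral.integral_eq_sub_of_hasDerivAt hderiv intervalIntegrable_const
  rw [intervalIntegral.integral_const, smul_eq_mul] at this
  linarith

theorem Dgate_explicit_solution_above_general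
    (R δ : ℝ) (hδ0 : 0 < δ) (hδ1 : δ < 1)
    (a : ℝ → ℝ)
    (ha : ∀ t : ℝ, 0 ≤ t → HasDerivAt a (R * a t * (a t - δ) * (1 - a t)) t)
    (h0 : δ < a 0) (h0' : a 0 < 1) :
    ∀ t : ℝ, 0 ≤ t →
      (a t / a 0) ^ (1 / δ) *
        ((a t - δ) / (a 0 - δ)) ^ (-(1 / (δ * (1 - δ)))) *
        ((1 - a t) / (1 - a 0)) ^ (1 / (1 - δ)) = Real.exp (-(R * t)) := by
  have hv : LocallyLipschitz fun x : ℝ ↦ R * x * (x - δ) * (1 - x) :=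
    ContDiff.locallyLipschitz (𝕂 := ℝ) (by fun_prop)
  have hmem : ∀ t, 0 ≤ t → a t ∈ Ioo δ 1 := fun t ht ↦
    mem_Ioo_of_hasDerivAt_of_eq_zero hv (by ring) (by ring) ha ⟨h0, h0'⟩ ht
  intro t ht
  rw [rpow_ratios_eq_exp_dgatePotential_sub hδ0 (hmem t ht) (hmem 0 le_rfl),
    dgatePotential_comp_eq_sub hδ0 hδ1 ha hmem ht, sub_sub_cancel_left]

theorem Dgate_explicit_solution_above
    (R δ : ℝ) (hR : 0 < R) (hδ0 : 0 < δ) (hδ1 : δ < 1)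
    (a : ℝ → ℝ)
    (ha : ∀ t : ℝ, 0 ≤ t → HasDerivAt a (R * a t * (a t - δ) * (1 - a t)) t)
    (h0 : δ < a 0) (h0' : a 0 < 1) :
    ∀ t : ℝ, 0 ≤ t →
      (a t / a 0) ^ (1 / δ) *
        ((a t - δ) / (a 0 - δ)) ^ (-(1 / (δ * (1 - δ)))) *
        ((1 - a t) / (1 - a 0)) ^ (1 / (1 - δ)) = Real.exp (-(R * t)) :=
  Dgate_explicit_solution_above_general R δ hδ0 hδ1 a ha h0 h0'
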